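/- arXiv:2205.05191 — 6 statements merged into one kernel-verified Lean document; each statement's English description precedes it below -/
import Mathlib

section
/- Let N ≥ 2 and u ∈ S_N with u ≠ 0 (not all coordinates zero). Define the 'spike-the-maximum' operation: apply π^{a,*} where a is a neuron achieving the maximum coordinate of the current list (ties broken by smallest index). Then after applying this operation N−1 times in succession starting from u, the resulting list is a ladder list, i.e. its set of coordinate values equals {0,1,...,N−1}. -/
/-- The spike map: neuron `a` spikes, its potential resets to `0`,
all other potentials increase by one. -/
def spike {N : ℕ} (a : Fin N) (u : Fin N → ℕ) : Fin N → ℕ :=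
  fun b => if b = a then 0 else u b + 1

/-- The neuron achieving the maximal membrane potential, ties broken by
smallest index. -/
noncomputable def argmaxIdx {N : ℕ} [NeZero N] (u : Fin N → ℕ) : Fin N :=
  (Finset.univ.filter (fun a => ∀ b, u b ≤ u a)).min' (by
    obtain ⟨a, -, ha⟩ := Finset.exists_max_image Finset.univ u Finset.univ_nonempty
    exact ⟨a, by simpa using fun b => ha b (Finset.mem_univ b)⟩)

/-- Spike the neuron with the greatest membrane potential. -/
noncomputable def spikeMax {N : ℕ} [NeZero N] (u : Fin N → ℕ) : Fin N → ℕ :=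
  spike (argmaxIdx u) u

lemma le_argmaxIdx {N : ℕ} [NeZero N] (u : Fin N → ℕ) (b : Fin N) :
    u b ≤ u (argmaxIdx u) := by
  have h : argmaxIdx u ∈ Finset.univ.filter (fun a => ∀ c, u c ≤ u a) := by
    unfold argmaxIdx
    exact Finset.min'_mem _ _
  exact (Finset.mem_filter.mp h).2 b

lemma spike_inv {N : ℕ} [NeZero N] (u : Fin N → ℕ) (hu : ∃ a, u a = 0) :
    ∀ k, k ≤ N - 1 → ∃ S : Finset (Fin N), S.card = k ∧
      (∀ b ∉ S, spikeMax^[k] u b = u b + k) ∧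
      S.image (spikeMax^[k] u) = Finset.range k ∧
      ∃ b ∉ S, u b = 0 := by
  have hNpos : 0 < N := Nat.pos_of_ne_zero (NeZero.ne N)
  intro k
  induction k with
  | zero =>
    intro _
    exact ⟨∅, by simp, by simp, by simp, by simpa using hu⟩
  | succ k ih =>
    intro hk
    obtain ⟨S, hcard, hoff, himg, b0, hb0S, hb0⟩ := ih (le_trans (Nat.le_succ k) hk)
    set w := spikeMax^[k] u with hw
    set a := argmaxIdx w with haa
    have hiter : spikeMax^[k+1] u = spike a w := by
      rw [Function.iterate_succ_apply']; rfl
    have hmem_lt : ∀ s ∈ S, w s < k := by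
      intro s hs
      have : w s ∈ Finset.range k := himg ▸ Finset.mem_image_of_mem w hs
      simpa using this
    have hcompl_card : Sᶜ.card = N - k := by
      rw [Finset.card_compl, hcard]; simp
    have haS : a ∉ S := by
      intro haS
      have h1 : w a < k := hmem_lt a haS
      have hc : ∃ c, c ∉ S := by
        have hkN : k < N := by
          have h4 := le_trans hk (Nat.sub_le N 1)
          exact lt_of_lt_of_le (Nat.lt_succ_self k) h4
        have hpos : 0 < Sᶜ.card := by
          rw [hcompl_card]; exact Nat.sub_pos_of_lt hkN
        obtain ⟨c, hc⟩ := Finset.card_pos.mp hpos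
        exact ⟨c, Finset.mem_compl.mp hc⟩
      obtain ⟨c, hcS⟩ := hc
      have h2 : w c = u c + k := hoff c hcS
      have h3 : w c ≤ w a := le_argmaxIdx w c
      omega
    refine ⟨insert a S, ?_, ?_, ?_, ?_⟩
    · rw [Finset.card_insert_of_notMem haS, hcard]
    · intro b hb
      have hba : b ≠ a := fun h => hb (h ▸ Finset.mem_insert_self a S)
      have hbS : b ∉ S := fun h => hb (Finset.mem_insert_of_mem h)
      rw [hiter]
      simp only [spike, if_neg hba, hoff b hbS]
      omega
    · rw [hiter, Finset.image_insert]
      have h0 : spike a w a = 0 := by simp [spike]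
      have hS : Finset.image (spike a w) S = Finset.image (fun m => m + 1) (Finset.image w S) := by
        rw [Finset.image_image]
        refine Finset.image_congr ?_
        intro s hs
        have hsa : s ≠ a := fun h => haS (h ▸ hs)
        simp [spike, hsa]
      rw [h0, hS, himg]
      ext m
      simp only [Finset.mem_insert, Finset.mem_image, Finset.mem_range]
      constructor
      · rintro (rfl | ⟨j, hj, rfl⟩) <;> omega
      · intro hm
        rcases Nat.eq_zero_or_pos m with rfl | hmpos
        · exact Or.inl rfl
        · exact Or.inr ⟨m - 1, by omega, by omega⟩
    · by_cases hba : b0 = a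
      · have hall : ∀ c, c ∉ S → u c = 0 := by
          intro c hcS
          have h1 : w c ≤ w a := le_argmaxIdx w c
          have h2 : w a = u a + k := hoff a haS
          have h3 : w c = u c + k := hoff c hcS
          rw [hba] at hb0
          omega
        have hcard2 : 1 < Sᶜ.card := by
          rw [hcompl_card]
          have h5 : 1 + k < N := by
            have h6 : N - 1 < N := Nat.sub_lt hNpos Nat.one_pos
            calc 1 + k = k + 1 := Nat.add_comm 1 k
              _ ≤ N - 1 := hk
              _ < N := h6
          exact Nat.lt_sub_of_add_lt h5
        obtain ⟨c, hc, d, hd, hcd⟩ := Finset.one_lt_card.mp hcard2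
        rw [Finset.mem_compl] at hc hd
        by_cases hca : c = a
        · refine ⟨d, ?_, hall d hd⟩
          simp only [Finset.mem_insert, not_or]
          exact ⟨fun h => hcd (hca.trans h.symm), hd⟩
        · refine ⟨c, ?_, hall c hc⟩
          simp [Finset.mem_insert, hc, hca]
      · refine ⟨b0, ?_, hb0⟩
        simp [Finset.mem_insert, hb0S, hba]

/-- Starting from any non-null list in `S_N` and spiking the neuron with maximal
potential `N - 1` times in succession yields a ladder list. -/
theorem spikeMax_iterate_ladder {N : ℕ} [NeZero N] (hN : 2 ≤ N) (u : Fin N → ℕ)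
    (hu : ∃ a, u a = 0) (hu0 : u ≠ fun _ => 0) :
    Set.range (spikeMax^[N - 1] u) = Set.Iio N := by
  obtain ⟨S, hcard, hoff, himg, b0, hb0S, hb0⟩ := spike_inv u hu (N - 1) le_rfl
  have hcompl : Sᶜ = {b0} := by
    have h1 : Sᶜ.card = 1 := by
      rw [Finset.card_compl, hcard, Fintype.card_fin]; omega
    obtain ⟨x, hx⟩ := Finset.card_eq_one.mp h1
    have hb : b0 ∈ Sᶜ := Finset.mem_compl.mpr hb0S
    rw [hx] at hb ⊢
    simp only [Finset.mem_singleton] at hb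
    rw [hb]
  ext n
  simp only [Set.mem_range, Set.mem_Iio]
  constructor
  · rintro ⟨b, rfl⟩
    by_cases hb : b ∈ S
    · have : spikeMax^[N-1] u b ∈ Finset.range (N-1) :=
        himg ▸ Finset.mem_image_of_mem _ hb
      simp only [Finset.mem_range] at this
      omega
    · have hbb0 : b = b0 := by
        have : b ∈ Sᶜ := Finset.mem_compl.mpr hb
        rw [hcompl] at this
        simpa using this
      rw [hbb0, hoff b0 hb0S, hb0]
      omega
  · intro hn
    by_cases h : n < N - 1
    · have : n ∈ Finset.image (spikeMax^[N-1] u) S := himg ▸ Finset.mem_range.mpr h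
      obtain ⟨b, _, hbn⟩ := Finset.mem_image.mp this
      exact ⟨b, hbn⟩
    · have hn1 : n = N - 1 := by omega
      exact ⟨b0, by rw [hoff b0 hb0S, hb0, hn1]; omega⟩
end

section
/- Let N ≥ 2 and let l ∈ ℕ^N be the ladder list defined by l(a) = a − 1 for a ∈ {1,...,N}. Then for every u ∈ S_N, l = π^{1,*} ∘ π^{2,*} ∘ ... ∘ π^{N,*}(u), i.e. spiking the neurons N, N−1, ..., 2, 1 in that order from any initial list in S_N produces the ladder list l. -/
lemma foldr_spike_aux {N : ℕ} (L : List (Fin N)) (u : Fin N → ℕ) (a : Fin N)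
    (ha : a ∈ L) (hnd : L.Nodup) : L.foldr spike u a = L.idxOf a := by
  induction L with
  | nil => simp at ha
  | cons x xs ih =>
    by_cases h : a = x
    · subst h
      simp [spike]
    · rw [List.idxOf_cons_ne _ (fun e => h e.symm)]
      have ha' : a ∈ xs := by
        rcases List.mem_cons.mp ha with h' | h'
        · exact absurd h' h
        · exact h'
      simp only [List.foldr_cons, spike, if_neg h]
      rw [ih ha' (List.Nodup.of_cons hnd)]

/-- Spiking the neurons `N, N-1, ..., 2, 1` in that order (i.e. applying
`π^{1,*} ∘ π^{2,*} ∘ ⋯ ∘ π^{N,*}`, here `0`-indexed) starting from any list in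
`S_N` produces the ladder list `l(a) = a - 1` (here `l a = a` with `0`-indexing). -/
theorem foldr_spike_eq_ladder {N : ℕ} (hN : 2 ≤ N) (u : Fin N → ℕ)
    (hu : ∃ a, u a = 0) :
    (List.finRange N).foldr spike u = fun a : Fin N => (a : ℕ) := by
  funext a
  rw [foldr_spike_aux _ u a (List.mem_finRange a) (List.nodup_finRange N)]
  simp
end

section
/- The sequence (e^{⌊N^{1/2}⌋} / (e^{⌊N^{1/2}⌋} + 2N))^{⌊e^{N^{1/2}} N^{−2}⌋} converges to 1 as N → +∞. -/
/-!
Write `m = ⌊√N⌋₊` and `k = ⌊e^{√N} N⁻²⌋₊`. By Bernoulli's inequality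
`1 - 2kN / e^m ≤ (e^m / (e^m + 2N))^k ≤ 1`, and since `√N < m + 1` we have `k ≤ e · e^m / N²`,
so the lower bound is at least `1 - 2e / N → 1`.
-/

open Real Filter

lemma one_sub_mul_div_le_pow_div_add {a b : ℝ} (ha : 0 < a) (hb : 0 ≤ b) (k : ℕ) :
    1 - k * b / a ≤ (a / (a + b)) ^ k := by
  have hab : 0 < a + b := by positivity
  have hbase : a / (a + b) - 1 = -(b / (a + b)) := by field_simp; ring
  have hbern := one_add_mul_sub_le_pow (by linarith [div_pos ha hab] : -1 ≤ a / (a + b)) k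
  have hshrink : b / (a + b) ≤ b / a := div_le_div_of_nonneg_left hb ha (by linarith)
  rw [hbase] at hbern
  rw [mul_div_assoc]
  linarith [mul_le_mul_of_nonneg_left hshrink (Nat.cast_nonneg (α := ℝ) k)]

lemma pow_div_add_le_one {a b : ℝ} (ha : 0 < a) (hb : 0 ≤ b) (k : ℕ) :
    (a / (a + b)) ^ k ≤ 1 :=
  pow_le_one₀ (by positivity) ((div_le_one (by positivity)).2 (by linarith))

lemma Real.exp_le_exp_one_mul_exp_floor (x : ℝ) : exp x ≤ exp 1 * exp ⌊x⌋₊ := by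
  rw [← exp_add, exp_le_exp]
  linarith [Nat.lt_floor_add_one x]

lemma Real.floor_exp_mul_div_exp_floor_le (x : ℝ) {c : ℝ} (hc : 0 ≤ c) :
    (⌊exp x * c⌋₊ : ℝ) / exp ⌊x⌋₊ ≤ exp 1 * c := by
  rw [div_le_iff₀ (exp_pos _)]
  calc (⌊exp x * c⌋₊ : ℝ) ≤ exp x * c := Nat.floor_le (by positivity)
    _ ≤ exp 1 * exp ⌊x⌋₊ * c := by gcongr; exact exp_le_exp_one_mul_exp_floor x
    _ = exp 1 * c * exp ⌊x⌋₊ := by ring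

lemma one_sub_div_le_max_spike_bound {N : ℕ} (hN : 1 ≤ N) :
    1 - 2 * exp 1 / N ≤
      (exp (⌊√N⌋₊ : ℝ) / (exp (⌊√N⌋₊ : ℝ) + 2 * N)) ^ ⌊exp √N * (N : ℝ) ^ (-2 : ℤ)⌋₊ := by
  have hNpos : (0 : ℝ) < N := by exact_mod_cast hN
  refine le_trans ?_ (one_sub_mul_div_le_pow_div_add (exp_pos _) (by positivity) _)
  have hratio := floor_exp_mul_div_exp_floor_le √N (by positivity : (0 : ℝ) ≤ (N : ℝ) ^ (-2 : ℤ))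
  calc 1 - 2 * exp 1 / N = 1 - exp 1 * (N : ℝ) ^ (-2 : ℤ) * (2 * N) := by
        rw [zpow_neg, zpow_two]; field_simp
    _ ≤ _ := by
      rw [mul_div_right_comm]
      exact sub_le_sub_left (mul_le_mul_of_nonneg_right hratio (by positivity)) 1

/-- `(e^{⌊√N⌋} / (e^{⌊√N⌋} + 2N))^{⌊e^{√N} N⁻²⌋} → 1` as `N → ∞`. -/
theorem tendsto_max_spike_bound :
    Tendsto (fun N : ℕ =>
        (Real.exp (⌊Real.sqrt N⌋₊ : ℝ) / (Real.exp (⌊Real.sqrt N⌋₊ : ℝ) + 2 * N)) ^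
          ⌊Real.exp (Real.sqrt N) * (N : ℝ) ^ (-2 : ℤ)⌋₊)
      atTop (nhds 1) := by
  have hlower : Tendsto (fun N : ℕ => 1 - 2 * exp 1 / N) atTop (nhds 1) := by
    simpa using tendsto_const_nhds.sub (tendsto_const_div_atTop_nhds_zero_nat (2 * exp 1))
  refine tendsto_of_tendsto_of_tendsto_of_le_of_le' hlower tendsto_const_nhds ?_ ?_
  · filter_upwards [eventually_ge_atTop 1] with N hN using one_sub_div_le_max_spike_bound hN
  · exact Eventually.of_forall fun N => pow_div_add_le_one (exp_pos _) (by positivity) _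
end

section
/- Let ζ = 1 − e^{−1}. Then the sequence 1 − (1 − ζ^{2⌈N^{1/2}⌉})^{⌊e^{N^{1/2}} N^{−2}⌋ / (2⌈N^{1/2}⌉)} converges to 1 as N → +∞. -/
open Real Filter

/-! Since `1 - x ≤ e^{-x}`, we have `(1 - x)^r ≤ e^{-rx}`, so it suffices that `r ζ^{2k} → ∞`,
where `k = ⌈√N⌉` and `r` is the exponent. As `√N ≥ k - 1` and `N ≤ k²`, the product is at least
`⌊e^{k-1}/k⁴⌋ ζ^{2k} / (2k) ≈ (e ζ²)^k / (2e k⁵)`, which tends to infinity because `e ζ² > 1`,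
i.e. `e^{-1/2} < 1 - e^{-1}`. -/

lemma one_sub_rpow_le_exp_neg_mul {x r : ℝ} (hx : x ≤ 1) (hr : 0 ≤ r) :
    (1 - x) ^ r ≤ exp (-(r * x)) :=
  calc (1 - x) ^ r ≤ exp (-x) ^ r := rpow_le_rpow (sub_nonneg.2 hx) (one_sub_le_exp_neg x) hr
    _ = exp (-(r * x)) := by rw [← exp_mul]; ring_nf

lemma tendsto_one_sub_rpow_nhds_zero {α : Type*} {l : Filter α} {x r : α → ℝ}
    (hx : ∀ a, x a ≤ 1) (hr : ∀ a, 0 ≤ r a) (hrx : Tendsto (fun a => r a * x a) l atTop) :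
    Tendsto (fun a => (1 - x a) ^ r a) l (nhds 0) :=
  tendsto_of_tendsto_of_tendsto_of_le_of_le tendsto_const_nhds
    (tendsto_exp_atBot.comp (tendsto_neg_atTop_atBot.comp hrx))
    (fun a => rpow_nonneg (sub_nonneg.2 (hx a)) _)
    (fun a => one_sub_rpow_le_exp_neg_mul (hx a) (hr a))

lemma tendsto_pow_div_pow_const_atTop {a : ℝ} (ha : 1 < a) (m : ℕ) :
    Tendsto (fun k : ℕ => a ^ k / (k : ℝ) ^ m) atTop atTop := by
  have hpos : ∀ᶠ k : ℕ in atTop, 0 < (k : ℝ) ^ m / a ^ k := by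
    filter_upwards [eventually_ge_atTop 1] with k hk
    have : (0 : ℝ) < k := by exact_mod_cast hk
    positivity
  exact (tendsto_nhdsWithin_iff.2 ⟨tendsto_pow_const_div_const_pow_of_one_lt m ha, hpos⟩
    ).inv_tendsto_nhdsGT_zero.congr fun k => inv_div _ _

lemma exp_neg_half_lt_one_sub_exp_neg_one : exp (-(1 / 2)) < 1 - exp (-1) := by
  have h_half : (13 / 8 : ℝ) ≤ exp (1 / 2) := by
    linarith [quadratic_le_exp_of_nonneg (x := 1 / 2) (by norm_num)]
  have h_one : exp (-1) = exp (-(1 / 2)) ^ 2 := by rw [← exp_nat_mul]; norm_num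
  have h_lt : exp (-(1 / 2)) ≤ 8 / 13 := by
    rw [exp_neg, inv_le_comm₀ (exp_pos _) (by norm_num)]; linarith
  nlinarith [exp_pos (-(1 / 2))]

lemma one_lt_exp_one_mul_one_sub_exp_neg_one_sq : 1 < exp 1 * (1 - exp (-1)) ^ 2 := by
  have h := exp_neg_half_lt_one_sub_exp_neg_one
  calc (1 : ℝ) = exp 1 * exp (-(1 / 2)) ^ 2 := by rw [← exp_nat_mul, ← exp_add]; norm_num
    _ < exp 1 * (1 - exp (-1)) ^ 2 := by gcongr

lemma tendsto_floor_exp_div_pow_mul_pow_atTop {ζ : ℝ} (hζ₀ : 0 ≤ ζ) (hζ₁ : ζ ≤ 1)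
    (h : 1 < exp 1 * ζ ^ 2) :
    Tendsto (fun k : ℕ => (⌊exp (k - 1) / (k : ℝ) ^ 4⌋₊ : ℝ) / (2 * k) * ζ ^ (2 * k))
      atTop atTop := by
  have hmain : Tendsto (fun k : ℕ => (exp 1 * ζ ^ 2) ^ k / (k : ℝ) ^ 5 / (2 * exp 1) - 1)
      atTop atTop :=
    tendsto_atTop_add_const_right _ _
      ((tendsto_pow_div_pow_const_atTop h 5).atTop_div_const (by positivity))
  refine tendsto_atTop_mono' _ ?_ hmain
  filter_upwards [eventually_ge_atTop 1] with k hk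
  have hk₀ : (1 : ℝ) ≤ k := by exact_mod_cast hk
  have hpow : ζ ^ (2 * k) ≤ 1 := pow_le_one₀ hζ₀ hζ₁
  have hsmall : ζ ^ (2 * k) / (2 * k) ≤ 1 := div_le_one_of_le₀ (by linarith) (by positivity)
  have hsplit : (exp (k - 1) / (k : ℝ) ^ 4 - 1) / (2 * k) * ζ ^ (2 * k)
      = (exp 1 * ζ ^ 2) ^ k / (k : ℝ) ^ 5 / (2 * exp 1) - ζ ^ (2 * k) / (2 * k) := by
    rw [mul_pow, ← pow_mul, ← exp_nat_mul, exp_sub]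
    field_simp
  calc (exp 1 * ζ ^ 2) ^ k / (k : ℝ) ^ 5 / (2 * exp 1) - 1
      ≤ (exp (k - 1) / (k : ℝ) ^ 4 - 1) / (2 * k) * ζ ^ (2 * k) := by rw [hsplit]; linarith
    _ ≤ _ := by gcongr; exact (Nat.sub_one_lt_floor _).le

lemma exp_pred_ceil_sqrt_div_pow_le {N : ℕ} (hN : 1 ≤ N) :
    exp (⌈√N⌉₊ - 1) / (⌈√N⌉₊ : ℝ) ^ 4 ≤ exp √N * (N : ℝ) ^ (-2 : ℤ) := by
  have hN₀ : (0 : ℝ) < N := by exact_mod_cast hN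
  have hsq : (N : ℝ) ≤ (⌈√N⌉₊ : ℝ) ^ 2 := by
    simpa [sq_sqrt hN₀.le] using pow_le_pow_left₀ (sqrt_nonneg _) (Nat.le_ceil √N) 2
  rw [div_eq_mul_inv, zpow_neg, show (4 : ℕ) = 2 * 2 from rfl, pow_mul]
  gcongr
  · linarith [Nat.ceil_lt_add_one (sqrt_nonneg (N : ℝ))]
  · exact pow_le_pow_left₀ hN₀.le hsq 2

/-- With `ζ = 1 - e⁻¹`,
`1 - (1 - ζ^{2⌈√N⌉})^{⌊e^{√N} N⁻²⌋ / (2⌈√N⌉)} → 1` as `N → ∞`. -/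
theorem tendsto_coupling_bound :
    Tendsto (fun N : ℕ =>
        1 - ((1 : ℝ) - (1 - Real.exp (-1)) ^ (2 * ⌈Real.sqrt N⌉₊)) ^
          ((⌊Real.exp (Real.sqrt N) * (N : ℝ) ^ (-2 : ℤ)⌋₊ : ℝ) /
            (2 * (⌈Real.sqrt N⌉₊ : ℝ))))
      atTop (nhds 1) := by
  set ζ : ℝ := 1 - exp (-1)
  have hζ₀ : 0 ≤ ζ := sub_nonneg.2 (exp_le_one_iff.2 (by norm_num))
  have hζ₁ : ζ ≤ 1 := sub_le_self _ (exp_pos _).le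
  have hceil : Tendsto (fun N : ℕ => ⌈√N⌉₊) atTop atTop :=
    tendsto_nat_ceil_atTop.comp (tendsto_sqrt_atTop.comp tendsto_natCast_atTop_atTop)
  have hgrowth := (tendsto_floor_exp_div_pow_mul_pow_atTop hζ₀ hζ₁
    one_lt_exp_one_mul_one_sub_exp_neg_one_sq).comp hceil
  have hprod : Tendsto (fun N : ℕ => (⌊exp √N * (N : ℝ) ^ (-2 : ℤ)⌋₊ : ℝ) /
      (2 * (⌈√N⌉₊ : ℝ)) * ζ ^ (2 * ⌈√N⌉₊)) atTop atTop := by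
    refine tendsto_atTop_mono' _ ?_ hgrowth
    filter_upwards [eventually_ge_atTop 1] with N hN
    simp only [Function.comp_apply]
    gcongr
    exact exp_pred_ceil_sqrt_div_pow_le hN
  simpa using (tendsto_one_sub_rpow_nhds_zero (fun _ => pow_le_one₀ hζ₀ hζ₁)
    (fun _ => by positivity) hprod).const_sub 1
end

section
/- Let (f_N)_{N≥2} be a sequence of nonincreasing functions f_N : [0, +∞) → [0, 1] with f_N(1) = e^{−1} for all N, and suppose that for all s, t ≥ 0, |f_N(s + t) − f_N(s) f_N(t)| → 0 as N → +∞. Then f_N(t) → e^{−t} as N → +∞, for every t > 0. -/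
open Real Filter

/-- Abstract memoryless-limit lemma: if `f_N : [0,∞) → [0,1]` are nonincreasing,
`f_N(1) = e⁻¹`, and `|f_N(s+t) - f_N(s) f_N(t)| → 0` for all `s, t ≥ 0`, then
`f_N(t) → e^{-t}` for every `t > 0`. -/
theorem memoryless_limit (f : ℕ → ℝ → ℝ)
    (hmono : ∀ N : ℕ, ∀ s t : ℝ, 0 ≤ s → s ≤ t → f N t ≤ f N s)
    (hrange : ∀ N : ℕ, ∀ t : ℝ, 0 ≤ t → f N t ∈ Set.Icc (0 : ℝ) 1)
    (hone : ∀ N : ℕ, f N 1 = Real.exp (-1))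
    (hmul : ∀ s t : ℝ, 0 ≤ s → 0 ≤ t →
      Tendsto (fun N => |f N (s + t) - f N s * f N t|) atTop (nhds 0)) :
    ∀ t : ℝ, 0 < t → Tendsto (fun N => f N t) atTop (nhds (Real.exp (-t))) := by
  have key : ∀ s t : ℝ, 0 ≤ s → 0 ≤ t →
      Tendsto (fun N => f N (s + t) - f N s * f N t) atTop (nhds 0) := by
    intro s t hs ht
    exact (tendsto_zero_iff_abs_tendsto_zero _).mpr (hmul s t hs ht)
  have prod : ∀ x : ℝ, 0 ≤ x → ∀ s : ℝ, 0 ≤ s →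
      Tendsto (fun N => f N x) atTop (nhds (Real.exp (-x))) →
      Tendsto (fun N => f N s) atTop (nhds (Real.exp (-s))) →
      Tendsto (fun N => f N (x + s)) atTop (nhds (Real.exp (-(x + s)))) := by
    intro x hx s hs h1 h2
    have h : Tendsto (fun N => (f N (x + s) - f N x * f N s) + f N x * f N s) atTop
        (nhds (0 + Real.exp (-x) * Real.exp (-s))) := (key x s hx hs).add (h1.mul h2)
    simpa [neg_add, Real.exp_add, mul_comm] using h
  have half : ∀ x : ℝ, 0 ≤ x →
      Tendsto (fun N => f N (x + x)) atTop (nhds (Real.exp (-(x + x)))) →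
      Tendsto (fun N => f N x) atTop (nhds (Real.exp (-x))) := by
    intro x hx h2
    have hsq : Tendsto (fun N => f N x * f N x) atTop (nhds (Real.exp (-(x + x)))) := by
      have h : Tendsto (fun N => f N (x + x) - (f N (x + x) - f N x * f N x)) atTop
          (nhds (Real.exp (-(x + x)) - 0)) := h2.sub (key x x hx hx)
      simpa using h
    have hs : Tendsto (fun N => Real.sqrt (f N x * f N x)) atTop
        (nhds (Real.sqrt (Real.exp (-(x + x))))) := (Real.continuous_sqrt.tendsto _).comp hsq
    have heq : ∀ N, Real.sqrt (f N x * f N x) = f N x := fun N =>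
      Real.sqrt_mul_self (hrange N x hx).1
    have heq2 : Real.sqrt (Real.exp (-(x + x))) = Real.exp (-x) := by
      rw [neg_add, Real.exp_add, Real.sqrt_mul_self (Real.exp_nonneg _)]
    rw [heq2] at hs
    exact hs.congr heq
  have pow : ∀ n : ℕ, Tendsto (fun N => f N (((2 : ℝ) ^ n)⁻¹)) atTop
      (nhds (Real.exp (-((2 : ℝ) ^ n)⁻¹))) := by
    intro n
    induction n with
    | zero =>
      simp only [pow_zero, inv_one, hone]
      exact tendsto_const_nhds
    | succ n ih =>
      have hsum : ((2 : ℝ) ^ (n + 1))⁻¹ + ((2 : ℝ) ^ (n + 1))⁻¹ = ((2 : ℝ) ^ n)⁻¹ := by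
        rw [pow_succ]
        field_simp
        ring
      exact half _ (by positivity) (by rw [hsum]; exact ih)
  have mult : ∀ x : ℝ, 0 ≤ x → Tendsto (fun N => f N x) atTop (nhds (Real.exp (-x))) →
      ∀ k : ℕ, Tendsto (fun N => f N (((k : ℝ) + 1) * x)) atTop
        (nhds (Real.exp (-(((k : ℝ) + 1) * x)))) := by
    intro x hx hbase k
    induction k with
    | zero => simpa using hbase
    | succ k ih =>
      have h := prod (((k : ℝ) + 1) * x) (by positivity) x hx ih hbase
      have h2 : (((k + 1 : ℕ) : ℝ) + 1) * x = ((k : ℝ) + 1) * x + x := by push_cast; ring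
      rw [h2]
      exact h
  intro t ht
  rw [Metric.tendsto_atTop]
  intro ε hε
  have hg : Continuous (fun s : ℝ => Real.exp (-s)) := Real.continuous_exp.comp continuous_neg
  obtain ⟨δ, hδpos, hδ⟩ := Metric.continuousAt_iff.mp (hg.continuousAt (x := t)) (ε / 2) (half_pos hε)
  have hm : 0 < min δ t := lt_min hδpos ht
  obtain ⟨n, hn⟩ : ∃ n : ℕ, (min δ t)⁻¹ < 2 ^ n := pow_unbounded_of_one_lt _ one_lt_two
  set c : ℝ := ((2 : ℝ) ^ n)⁻¹ with hc_def
  have hcpos : 0 < c := by positivity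
  have hclt : c < min δ t := by
    rw [hc_def, inv_lt_comm₀ (by positivity) hm]
    exact hn
  have hcδ : c < δ := lt_of_lt_of_le hclt (min_le_left _ _)
  have hct : c < t := lt_of_lt_of_le hclt (min_le_right _ _)
  have hfl1 : 1 ≤ ⌊t / c⌋₊ := by
    apply Nat.le_floor
    rw [Nat.cast_one, le_div_iff₀ hcpos, one_mul]
    exact hct.le
  obtain ⟨k, hk⟩ : ∃ k : ℕ, ⌊t / c⌋₊ = k + 1 :=
    ⟨⌊t / c⌋₊ - 1, (Nat.succ_pred_eq_of_pos hfl1).symm⟩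
  set a : ℝ := ((k : ℝ) + 1) * c with ha_def
  have ha_pos : 0 < a := by positivity
  have ha_le : a ≤ t := by
    have h1 : ((⌊t / c⌋₊ : ℝ)) ≤ t / c := Nat.floor_le (by positivity)
    rw [hk] at h1
    push_cast at h1
    rw [ha_def]
    calc ((k : ℝ) + 1) * c ≤ (t / c) * c := by nlinarith
      _ = t := div_mul_cancel₀ t hcpos.ne'
  have hb_gt : t < a + c := by
    have h1 : t / c < (⌊t / c⌋₊ : ℝ) + 1 := Nat.lt_floor_add_one _
    rw [hk] at h1
    push_cast at h1
    have := (div_lt_iff₀ hcpos).mp h1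
    rw [ha_def]
    nlinarith
  have hA := mult c hcpos.le (pow n) k
  have hB := mult c hcpos.le (pow n) (k + 1)
  have hBa : (((k + 1 : ℕ) : ℝ) + 1) * c = a + c := by rw [ha_def]; push_cast; ring
  rw [hBa] at hB
  rw [← ha_def] at hA
  obtain ⟨Ma, hMa⟩ := Metric.tendsto_atTop.mp hA (ε / 2) (half_pos hε)
  obtain ⟨Mb, hMb⟩ := Metric.tendsto_atTop.mp hB (ε / 2) (half_pos hε)
  refine ⟨max Ma Mb, fun N hN => ?_⟩
  have dA := hMa N (le_of_max_le_left hN)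
  have dB := hMb N (le_of_max_le_right hN)
  rw [Real.dist_eq] at dA dB
  have eA : |Real.exp (-a) - Real.exp (-t)| < ε / 2 := by
    have := hδ (x := a) (by rw [Real.dist_eq]; rw [abs_lt]; constructor <;> nlinarith)
    rwa [Real.dist_eq] at this
  have eB : |Real.exp (-(a + c)) - Real.exp (-t)| < ε / 2 := by
    have := hδ (x := a + c) (by rw [Real.dist_eq]; rw [abs_lt]; constructor <;> nlinarith)
    rwa [Real.dist_eq] at this
  have h1 : f N t ≤ f N a := hmono N a t ha_pos.le ha_le
  have h2 : f N (a + c) ≤ f N t := hmono N t (a + c) ht.le hb_gt.le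
  rw [Real.dist_eq, abs_lt]
  rw [abs_lt] at dA dB eA eB
  constructor <;> linarith
end

section
/- Let N ≥ 4 and let W_N be the set of u ∈ S_N such that {1, 2, ..., N − ⌊N^{1/2}⌋} ⊆ {u(a) : a ∈ {1,...,N}} and all coordinates of u are pairwise distinct. Let w ∈ W_N, let a* be the index of the (unique) maximal coordinate of w, and set u₁ = π^{a*,*}(w). Then {1, 2, ..., N − ⌊N^{1/2}⌋ + 1} ⊆ {u₁(a) : a ∈ {1,...,N}} and all coordinates of u₁ are pairwise distinct. -/
/-- Spiking the neuron with the (unique) maximal potential of a configuration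
in `W_N` yields a configuration with pairwise distinct coordinates whose set of
values contains `{1, …, N - ⌊√N⌋ + 1}`. -/
theorem spike_max_preserves_W {N : ℕ} (hN : 4 ≤ N) (w : Fin N → ℕ)
    (hS : ∃ a, w a = 0)
    (hW1 : ∀ k : ℕ, 1 ≤ k → k ≤ N - Nat.sqrt N → k ∈ Set.range w)
    (hW2 : Function.Injective w)
    (a : Fin N) (ha : ∀ b, w b ≤ w a) :
    (∀ k : ℕ, 1 ≤ k → k ≤ N - Nat.sqrt N + 1 → k ∈ Set.range (spike a w)) ∧
      Function.Injective (spike a w) := by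
  -- the maximum is at least N - 1
  have hNa : N ≤ w a + 1 := by
    have hsub : Finset.image w Finset.univ ⊆ Finset.Iic (w a) := by
      intro x hx
      simp only [Finset.mem_image] at hx
      obtain ⟨b, -, rfl⟩ := hx
      exact Finset.mem_Iic.mpr (ha b)
    have := Finset.card_le_card hsub
    rwa [Finset.card_image_of_injective _ hW2, Finset.card_univ, Fintype.card_fin,
      Nat.card_Iic] at this
  have hsqrt : 2 ≤ Nat.sqrt N := by
    calc 2 = Nat.sqrt 4 := by norm_num
    _ ≤ Nat.sqrt N := Nat.sqrt_le_sqrt hN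
  constructor
  · intro k hk1 hk2
    rcases eq_or_lt_of_le hk1 with h1 | h1
    · -- k = 1 : use the coordinate with value 0
      obtain ⟨c, hc⟩ := hS
      have hca : c ≠ a := by
        intro h
        rw [h] at hc; rw [hc] at hNa
        omega
      exact ⟨c, by simp [spike, hca, hc, ← h1]⟩
    · -- k ≥ 2
      obtain ⟨b, hb⟩ := hW1 (k - 1) (by omega) (by omega)
      have hba : b ≠ a := by
        intro h
        rw [h] at hb
        have : k - 1 ≤ N - 2 := by
          have : N - Nat.sqrt N ≤ N - 2 := Nat.sub_le_sub_left hsqrt N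
          omega
        omega
      exact ⟨b, by simp only [spike, if_neg hba, hb]; omega⟩
  · intro b c h
    simp only [spike] at h
    by_cases hb : b = a <;> by_cases hc : c = a
    · rw [hb, hc]
    · simp [hb, hc] at h
    · simp [hb, hc] at h
    · simp only [if_neg hb, if_neg hc] at h
      exact hW2 (by omega)
end
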